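/- arXiv:2011.02653 — 2 statements merged into one kernel-verified Lean document; each statement's English description precedes it below -/
import Mathlib

section
/- Let G be a 4-regular graph on n vertices. If n balls are sequentially placed by choosing a uniformly random edge and placing the ball in the lesser-loaded endpoint, then with high probability the maximum load is at least Ω(log n / log log n); i.e., no power-of-two-choices improvement over single-choice occurs. -/
/-!
Every ball lands on an endpoint of the edge it sampled, so if some oriented edge is sampled by
`k` balls, one of its two endpoints ends up with load at least `k / 2`. A `4`-regular graph on
`n` vertices has `4 n` oriented edges, so the samples are `n` balls thrown independently and
uniformly into `m = 4 n` cells, and it suffices that some cell receives exactly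
`k ≈ log n / (4 log log n)` balls with probability at least `1 - n ^ (-1/16)`. This is the
second moment method for the number `X` of cells holding exactly `k` balls:
`P(X > 0) ≥ (𝔼 X)² / 𝔼 X²` by Cauchy–Schwarz; `𝔼 X = m C(n, k) (m - 1)^(n - k) / m^n` is at
least `n ^ (1/16)` because `(8 k)^k ≤ n ^ (1/4)`, and two distinct cells are nearly
uncorrelated, so `𝔼 X² ≤ 𝔼 X + (1 + O(n ^ (-1/16))) (𝔼 X)²`.
-/

/-- Final load of bin `v` under allocation `alloc` of `n` balls into `n` bins. -/
def load {n : ℕ} (alloc : Fin n → Fin n) (v : Fin n) : ℕ :=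
  (Finset.univ.filter fun b => alloc b = v).card

/-- Maximum bin load. -/
def maxLoad {n : ℕ} (alloc : Fin n → Fin n) : ℕ :=
  Finset.univ.sup (load alloc)

/-- Load of bin `v` just before ball `b` is placed (sequential placement). -/
def loadBefore {n : ℕ} (alloc : Fin n → Fin n) (b : Fin n) (v : Fin n) : ℕ :=
  (Finset.univ.filter fun b' => b' < b ∧ alloc b' = v).card

/-- Sequential greedy edge-sampling allocation: each ball's outcome is a uniformly
random (oriented) edge of `G`; the ball is placed in the lesser-loaded endpoint,
ties broken arbitrarily. -/
def GreedyEdgeChoice {n : ℕ} (G : SimpleGraph (Fin n))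
    (A : (Fin n → {p : Fin n × Fin n // G.Adj p.1 p.2}) → Fin n → Fin n) : Prop :=
  ∀ ω b, (A ω b = (ω b : Fin n × Fin n).1 ∨ A ω b = (ω b : Fin n × Fin n).2) ∧
    ∀ v, (v = (ω b : Fin n × Fin n).1 ∨ v = (ω b : Fin n × Fin n).2) →
      loadBefore (A ω) b (A ω b) ≤ loadBefore (A ω) b v

open Finset Real

lemma sq_sum_le_card_filter_ne_zero_mul_sum_sq {α : Type*} [Fintype α] (X : α → ℕ) :
    (∑ a, X a) ^ 2 ≤ #{a | X a ≠ 0} * ∑ a, X a ^ 2 := by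
  rw [← sum_filter_ne_zero]
  exact sq_sum_le_card_mul_sum_sq.trans
    (Nat.mul_le_mul_left _ (sum_le_sum_of_subset (filter_subset _ _)))

section Occupancy
variable {E : Type*} [DecidableEq E] {n : ℕ}

def fiber (ω : Fin n → E) (e : E) : Finset (Fin n) := {b | ω b = e}

@[simp]
lemma mem_fiber {ω : Fin n → E} {e : E} {b : Fin n} : b ∈ fiber ω e ↔ ω b = e := by
  simp [fiber]

def occupancy (ω : Fin n → E) (e : E) : ℕ := #(fiber ω e)

variable [Fintype E]

lemma card_filter_fiber_eq (e : E) (s : Finset (Fin n)) :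
    #{ω : Fin n → E | fiber ω e = s}
      = (Fintype.card E - 1) ^ (n - #s) := by
  have hpi : ({ω : Fin n → E | fiber ω e = s} : Finset _) =
      Fintype.piFinset fun b => if b ∈ s then {e} else {e}ᶜ := by
    ext ω
    simp only [mem_filter, mem_univ, true_and, Fintype.mem_piFinset, Finset.ext_iff, mem_fiber]
    refine forall_congr' fun b => ?_
    split_ifs with hb <;> simp [hb]
  rw [hpi, Fintype.card_piFinset]
  simp [apply_ite card, prod_ite, card_compl, filter_not, card_sdiff]

lemma card_filter_fiber_eq_and_fiber_eq {e f : E} (hef : e ≠ f) {s t : Finset (Fin n)}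
    (hst : Disjoint s t) :
    #{ω : Fin n → E | fiber ω e = s ∧ fiber ω f = t}
      = (Fintype.card E - 2) ^ (n - #s - #t) := by
  have hpi : ({ω : Fin n → E | fiber ω e = s ∧ fiber ω f = t} : Finset _) =
      Fintype.piFinset fun b => if b ∈ s then {e} else if b ∈ t then {f} else {e, f}ᶜ := by
    ext ω
    simp only [mem_filter, mem_univ, true_and, Fintype.mem_piFinset, Finset.ext_iff, mem_fiber,
      ← forall_and]
    refine forall_congr' fun b => ?_
    have hb : b ∈ s → b ∉ t := fun h => disjoint_left.1 hst h
    split_ifs with hs ht <;> aesop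
  rw [hpi, Fintype.card_piFinset]
  have ht : ({b ∈ univ \ s | b ∈ t} : Finset (Fin n)) = t := by
    ext b
    simpa using fun hb => disjoint_right.1 hst hb
  simp [apply_ite card, prod_ite, card_compl, filter_not, hef, ht, sdiff_sdiff_left,
    card_union_of_disjoint hst, card_univ_sdiff, Nat.sub_sub]

lemma card_filter_occupancy_eq (e : E) (k : ℕ) :
    #{ω : Fin n → E | occupancy ω e = k} = n.choose k * (Fintype.card E - 1) ^ (n - k) := by
  rw [card_eq_sum_card_fiberwise (f := (fiber · e)) (t := powersetCard k univ)
    fun ω hω => by simpa [occupancy] using (mem_filter.1 (mem_coe.1 hω)).2]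
  rw [sum_congr rfl fun s hs => ?_, sum_const, card_powersetCard, card_univ, Fintype.card_fin,
    smul_eq_mul]
  rw [mem_powersetCard_univ] at hs
  rw [filter_filter, ← hs, ← card_filter_fiber_eq e s]
  congr 1
  refine filter_congr fun ω _ => and_iff_right_of_imp fun h => ?_
  rw [occupancy, h, hs]

lemma card_filter_occupancy_eq_and_occupancy_eq {e f : E} (hef : e ≠ f) (k : ℕ) :
    #{ω : Fin n → E | occupancy ω e = k ∧ occupancy ω f = k}
      = n.choose k * ((n - k).choose k * (Fintype.card E - 2) ^ (n - k - k)) := by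
  rw [card_eq_sum_card_fiberwise (f := (fiber · e)) (t := powersetCard k univ)
    fun ω hω => by simpa [occupancy] using (mem_filter.1 (mem_coe.1 hω)).2.1]
  rw [sum_congr rfl fun s hs => ?_, sum_const, card_powersetCard, card_univ, Fintype.card_fin,
    smul_eq_mul]
  rw [mem_powersetCard_univ] at hs
  rw [card_eq_sum_card_fiberwise (f := (fiber · f)) (t := powersetCard k sᶜ) fun ω hω => ?_]
  · rw [sum_congr rfl fun t ht => ?_, sum_const, card_powersetCard, card_compl, Fintype.card_fin,
      hs, smul_eq_mul]
    rw [mem_powersetCard] at ht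
    have hst : Disjoint s t := disjoint_left.2 fun b hbs hbt => mem_compl.1 (ht.1 hbt) hbs
    have hcount := card_filter_fiber_eq_and_fiber_eq (n := n) hef hst
    rw [hs, ht.2] at hcount
    rw [filter_filter, filter_filter, ← hcount]
    congr 1
    refine filter_congr fun ω _ => and_iff_right_of_imp fun h => ?_
    rw [occupancy, occupancy, h.1, h.2, hs, ht.2]
    exact ⟨rfl, rfl⟩
  · simp only [coe_filter, mem_filter, mem_univ, true_and] at hω
    obtain ⟨⟨-, hfk⟩, rfl⟩ := hω
    refine mem_powersetCard.2 ⟨fun b hb => mem_compl.2 fun hbe => hef ?_, hfk⟩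
    rw [mem_fiber] at hb hbe
    rw [← hb, hbe]

def occupancyCount (k : ℕ) (ω : Fin n → E) : ℕ := #{e | occupancy ω e = k}

lemma sum_occupancyCount (k : ℕ) :
    ∑ ω : Fin n → E, occupancyCount k ω
      = Fintype.card E * (n.choose k * (Fintype.card E - 1) ^ (n - k)) := by
  simp only [occupancyCount, card_filter]
  rw [sum_comm]
  simp only [← card_filter, card_filter_occupancy_eq, sum_const, card_univ, smul_eq_mul]

lemma sum_occupancyCount_sq (k : ℕ) :
    ∑ ω : Fin n → E, occupancyCount k ω ^ 2
      = Fintype.card E * (n.choose k * (Fintype.card E - 1) ^ (n - k))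
        + Fintype.card E * (Fintype.card E - 1) *
          (n.choose k * ((n - k).choose k * (Fintype.card E - 2) ^ (n - k - k))) := by
  have hsq (ω : Fin n → E) : occupancyCount k ω ^ 2
      = ∑ e, ∑ f, if occupancy ω e = k ∧ occupancy ω f = k then 1 else 0 := by
    simp only [occupancyCount, sq, card_filter, sum_mul_sum, ite_zero_mul_ite_zero, mul_one]
  have hrow (e : E) : ∑ f, #{ω : Fin n → E | occupancy ω e = k ∧ occupancy ω f = k}
      = n.choose k * (Fintype.card E - 1) ^ (n - k)
        + (Fintype.card E - 1) *
          (n.choose k * ((n - k).choose k * (Fintype.card E - 2) ^ (n - k - k))) := by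
    rw [← add_sum_erase _ _ (mem_univ e), sum_congr rfl fun f hf =>
      card_filter_occupancy_eq_and_occupancy_eq (Ne.symm (ne_of_mem_erase hf)) k]
    simp [card_filter_occupancy_eq]
  simp_rw [hsq]
  rw [sum_comm]
  simp_rw [sum_comm (s := univ (α := Fin n → E)), ← card_filter, hrow]
  simp only [sum_add_distrib, sum_const, card_univ, smul_eq_mul]
  ring

lemma sq_sum_occupancyCount_le (k : ℕ) :
    (∑ ω : Fin n → E, occupancyCount k ω) ^ 2
      ≤ #{ω : Fin n → E | ∃ e, occupancy ω e = k} *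
        ∑ ω : Fin n → E, occupancyCount k ω ^ 2 := by
  have hsupp (ω : Fin n → E) : occupancyCount k ω ≠ 0 ↔ ∃ e, occupancy ω e = k := by
    simp [occupancyCount]
  rw [← filter_congr fun ω _ => hsupp ω]
  exact sq_sum_le_card_filter_ne_zero_mul_sum_sq _

end Occupancy

lemma pow_mul_sub_two_pow_le {m a : ℝ} {k n : ℕ} (hm : 2 ≤ m) (hkn : 2 * k ≤ n)
    (hratio : m ^ (2 * k) ≤ a * (m - 1) ^ (2 * k)) :
    m ^ n * (m - 2) ^ (n - k - k) ≤ a * ((m - 1) ^ (n - k)) ^ 2 := by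
  obtain ⟨j, rfl⟩ := Nat.exists_eq_add_of_le hkn
  have hm1 : 0 ≤ m - 1 := by linarith
  have ha : 0 ≤ a :=
    (pos_of_mul_pos_left ((pow_pos (by linarith) _).trans_le hratio) (pow_nonneg hm1 _)).le
  rw [show 2 * k + j - k - k = j by omega, show 2 * k + j - k = k + j by omega]
  calc m ^ (2 * k + j) * (m - 2) ^ j = m ^ (2 * k) * (m * (m - 2)) ^ j := by
        rw [pow_add, mul_pow, mul_assoc]
    _ ≤ a * (m - 1) ^ (2 * k) * ((m - 1) ^ 2) ^ j := by
      gcongr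
      nlinarith
    _ = a * ((m - 1) ^ (k + j)) ^ 2 := by
      rw [← pow_mul, ← pow_mul, mul_assoc, ← pow_add]
      ring_nf

lemma pow_mul_sub_le_mul_sub_one_pow {m : ℝ} (hm : 1 ≤ m) (j : ℕ) :
    m ^ j * (m - j) ≤ m * (m - 1) ^ j := by
  induction j with
  | zero => simp
  | succ j ih =>
    have hpow : (m - 1) ^ j ≤ m ^ j := pow_le_pow_left₀ (by linarith) (by linarith) j
    push_cast
    nlinarith [pow_succ m j, pow_succ (m - 1) j]

lemma pow_le_two_mul_pow_mul_choose {n k : ℕ} (hkn : 2 * k ≤ n) :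
    n ^ k ≤ (2 * k) ^ k * n.choose k :=
  calc n ^ k ≤ (2 * (n + 1 - k)) ^ k := Nat.pow_le_pow_left (by omega) k
    _ = 2 ^ k * (n + 1 - k) ^ k := mul_pow _ _ _
    _ ≤ 2 ^ k * (k.factorial * n.choose k) := by
      rw [← Nat.descFactorial_eq_factorial_mul_choose]
      gcongr
      exact Nat.pow_sub_le_descFactorial n k
    _ ≤ 2 ^ k * (k ^ k * n.choose k) := by
      gcongr
      exact Nat.factorial_le_pow k
    _ = (2 * k) ^ k * n.choose k := by ring

lemma four_mul_pow_le_mul_choose_mul_pow {n k : ℕ} (hkn : 2 * k ≤ n) :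
    (4 * n : ℝ) ^ n ≤ 4 / 3 * (8 * k) ^ k * (n.choose k * (4 * n - 1) ^ (n - k)) := by
  rcases Nat.eq_zero_or_pos n with rfl | hn₀
  · obtain rfl : k = 0 := by omega
    norm_num
  have hn : (1 : ℝ) ≤ n := by exact_mod_cast hn₀
  have hfar : (4 * n : ℝ) ^ (n - k) ≤ 4 / 3 * (4 * n - 1) ^ (n - k) := by
    have hj : ((n - k : ℕ) : ℝ) ≤ n := by exact_mod_cast n.sub_le k
    have h3 : (4 * n : ℝ) ^ (n - k) * (3 * n) ≤ 4 * n * (4 * n - 1) ^ (n - k) :=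
      (mul_le_mul_of_nonneg_left (by linarith) (by positivity)).trans
        (pow_mul_sub_le_mul_sub_one_pow (by linarith) _)
    exact le_of_mul_le_mul_right (by linarith) (by positivity : (0 : ℝ) < 3 * n)
  have hnear : (4 * n : ℝ) ^ k ≤ (8 * k) ^ k * n.choose k := by
    have hc : (n : ℝ) ^ k ≤ (2 * k) ^ k * n.choose k := by
      exact_mod_cast pow_le_two_mul_pow_mul_choose hkn
    calc (4 * n : ℝ) ^ k = 4 ^ k * n ^ k := mul_pow _ _ _
      _ ≤ 4 ^ k * ((2 * k) ^ k * n.choose k) := by gcongr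
      _ = (8 * k) ^ k * n.choose k := by rw [← mul_assoc, ← mul_pow]; ring_nf
  calc (4 * n : ℝ) ^ n = (4 * n) ^ k * (4 * n) ^ (n - k) := by
        rw [← pow_add, Nat.add_sub_cancel' (by omega)]
    _ ≤ (8 * k) ^ k * n.choose k * (4 / 3 * (4 * n - 1) ^ (n - k)) :=
        mul_le_mul hnear hfar (by positivity) (by positivity)
    _ = 4 / 3 * (8 * k) ^ k * (n.choose k * (4 * n - 1) ^ (n - k)) := by ring

lemma pow_two_mul_le_one_add_mul_sub_one_pow {m δ : ℝ} {k : ℕ} (hδ₀ : 0 ≤ δ) (hδ₁ : δ ≤ 1)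
    (hk : 3 * k ≤ δ * m / 2) :
    m ^ (2 * k) ≤ (1 + δ / 2) * (m - 1) ^ (2 * k) := by
  rcases k.eq_zero_or_pos with rfl | hk₀
  · simp only [mul_zero, pow_zero, mul_one]
    linarith
  have hk₁ : (1 : ℝ) ≤ k := by exact_mod_cast hk₀
  have hm₀ : 0 < m := pos_of_mul_pos_right (by linarith : 0 < δ * m) hδ₀
  have hδm : δ * m ≤ m := mul_le_of_le_one_left hm₀.le hδ₁
  have hδk : δ * k ≤ k := mul_le_of_le_one_left k.cast_nonneg hδ₁
  have hb := pow_mul_sub_le_mul_sub_one_pow (m := m) (by linarith) (2 * k)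
  push_cast at hb
  refine le_of_mul_le_mul_right (hb.trans ?_) (by linarith : (0 : ℝ) < m - 2 * k)
  have hpow : (0 : ℝ) ≤ (m - 1) ^ (2 * k) := pow_nonneg (by linarith) _
  nlinarith

section SecondMoment
variable {E : Type*} [Fintype E] [DecidableEq E] {n : ℕ}

/-- With `X` the number of cells holding exactly `k` balls, `hmean` says `𝔼 X ≥ 4 / δ` and
`hratio` bounds the correlation of two distinct cells. -/
theorem one_sub_mul_card_pow_le_card_exists_occupancy_eq {δ : ℝ} {k : ℕ} (hδ₀ : 0 ≤ δ)
    (hδ₁ : δ ≤ 1) (hkn : 2 * k ≤ n) (hE : 2 ≤ Fintype.card E)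
    (hmean : (Fintype.card E : ℝ) ^ n
      ≤ δ / 4 * (Fintype.card E * (n.choose k * (Fintype.card E - 1) ^ (n - k))))
    (hratio : (Fintype.card E : ℝ) ^ (2 * k) ≤ (1 + δ / 2) * (Fintype.card E - 1) ^ (2 * k)) :
    (1 - δ) * (Fintype.card E : ℝ) ^ n ≤ #{ω : Fin n → E | ∃ e, occupancy ω e = k} := by
  have hm : (2 : ℝ) ≤ Fintype.card E := by exact_mod_cast hE
  have hcs := Nat.cast_le (α := ℝ) |>.2 (sq_sum_occupancyCount_le (E := E) (n := n) k)
  rw [sum_occupancyCount, sum_occupancyCount_sq] at hcs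
  push_cast [Nat.cast_sub (by omega : 1 ≤ Fintype.card E), Nat.cast_sub hE] at hcs
  set m : ℝ := (Fintype.card E : ℝ)
  set N : ℝ := ((#{ω : Fin n → E | ∃ e, occupancy ω e = k} : ℕ) : ℝ)
  set C : ℝ := (n.choose k : ℝ)
  set S₁ := m * (C * (m - 1) ^ (n - k))
  set R := m * (m - 1) * (C * ((n - k).choose k * (m - 2) ^ (n - k - k)))
  have hC : 0 < C := Nat.cast_pos.2 (Nat.choose_pos (by omega))
  have hS₁ : 0 < S₁ := by
    have : 0 < m - 1 := by linarith
    positivity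
  have hR₀ : 0 ≤ R := by
    have : 0 ≤ m - 2 := by linarith
    have : 0 ≤ m - 1 := by linarith
    positivity
  have hmeanS₁ : m ^ n * S₁ ≤ δ / 4 * S₁ ^ 2 := by
    calc m ^ n * S₁ ≤ δ / 4 * S₁ * S₁ := mul_le_mul_of_nonneg_right hmean hS₁.le
      _ = δ / 4 * S₁ ^ 2 := by ring
  have hmeanR : m ^ n * R ≤ (1 + δ / 2) * S₁ ^ 2 := by
    have hC' : ((n - k).choose k : ℝ) ≤ C := Nat.cast_le.2 (Nat.choose_le_choose k (n.sub_le k))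
    calc m ^ n * R = m * (m - 1) * C * (n - k).choose k * (m ^ n * (m - 2) ^ (n - k - k)) := by
          ring
      _ ≤ m * m * C * C * ((1 + δ / 2) * ((m - 1) ^ (n - k)) ^ 2) := by
          refine mul_le_mul ?_ (pow_mul_sub_two_pow_le hm hkn hratio) ?_ (by positivity)
          · gcongr; linarith
          · have : 0 ≤ m - 2 := by linarith
            positivity
      _ = (1 + δ / 2) * S₁ ^ 2 := by ring
  have key : (1 - δ) * m ^ n * (S₁ + R) ≤ S₁ ^ 2 := by
    have h := mul_le_mul_of_nonneg_left (add_le_add hmeanS₁ hmeanR) (sub_nonneg.2 hδ₁)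
    nlinarith [mul_nonneg (mul_nonneg hδ₀ hδ₀) (sq_nonneg S₁), mul_nonneg hδ₀ (sq_nonneg S₁)]
  exact le_of_mul_le_mul_right (key.trans hcs) (by positivity)

theorem one_sub_rpow_mul_pow_le_card_exists_occupancy_eq_of_card_eq {k : ℕ}
    (hE : Fintype.card E = 4 * n) (hlog : 1 ≤ log n) (hk8 : (8 * k : ℝ) ^ k ≤ exp (log n / 4))
    (hk2 : 2 * k ≤ exp (log n / 2)) :
    (1 - (n : ℝ) ^ (-(1 / 16 : ℝ))) * (Fintype.card E : ℝ) ^ n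
      ≤ #{ω : Fin n → E | ∃ e, occupancy ω e = k} := by
  set t := log n with ht
  have hn₀ : 0 < n := Nat.pos_of_ne_zero fun h => by norm_num [t, h] at hlog
  have hn : (0 : ℝ) < n := Nat.cast_pos.2 hn₀
  have hnt : (n : ℝ) = exp t := (exp_log hn).symm
  have hδ : (n : ℝ) ^ (-(1 / 16 : ℝ)) = exp (-(t / 16)) := by
    rw [rpow_def_of_pos hn, ← ht]; ring_nf
  have hδn : exp (-(t / 16)) * n = exp (15 * t / 16) := by
    rw [hnt, ← exp_add]; ring_nf
  have hkn : 2 * k ≤ n := by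
    have : exp (t / 2) ≤ n := hnt ▸ exp_le_exp.2 (by linarith)
    exact_mod_cast hk2.trans this
  have hEr : (Fintype.card E : ℝ) = 4 * n := by rw [hE]; push_cast; ring
  rw [hδ]
  refine one_sub_mul_card_pow_le_card_exists_occupancy_eq (exp_pos _).le
    (exp_le_one_iff.2 (by linarith)) hkn (by omega) ?_ ?_ <;> rw [hEr]
  · have hexp : 4 / 3 * exp (t / 4) ≤ exp (15 * t / 16) := by
      have h := add_one_le_exp (11 * t / 16)
      rw [show 15 * t / 16 = 11 * t / 16 + t / 4 by ring, exp_add]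
      nlinarith [exp_pos (t / 4)]
    have h4n : (0 : ℝ) ≤ 4 * n - 1 := by linarith [(Nat.one_le_cast (α := ℝ)).2 hn₀]
    calc (4 * n : ℝ) ^ n ≤ 4 / 3 * (8 * k) ^ k * (n.choose k * (4 * n - 1) ^ (n - k)) :=
          four_mul_pow_le_mul_choose_mul_pow hkn
      _ ≤ 4 / 3 * exp (t / 4) * (n.choose k * (4 * n - 1) ^ (n - k)) := by gcongr
      _ ≤ exp (15 * t / 16) * (n.choose k * (4 * n - 1) ^ (n - k)) := by gcongr
      _ = _ := by rw [← hδn]; ring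
  · refine pow_two_mul_le_one_add_mul_sub_one_pow (exp_pos _).le
      (exp_le_one_iff.2 (by linarith)) ?_
    have : exp (t / 2) ≤ exp (-(t / 16)) * n := hδn ▸ exp_le_exp.2 (by linarith)
    nlinarith [exp_pos (-(t / 16))]

end SecondMoment

lemma exists_nat_ge_div_log_and_pow_le_exp {t : ℝ} (ht : exp 16 ≤ t) :
    ∃ k : ℕ, t / (8 * log t) ≤ k ∧ (8 * k : ℝ) ^ k ≤ exp (t / 4) ∧
      2 * k ≤ exp (t / 2) := by
  set u := log t
  have ht₀ : 0 < t := (exp_pos 16).trans_le ht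
  have hu : 16 ≤ u := by simpa [u] using log_le_log (exp_pos 16) ht
  have hut : exp u = t := exp_log ht₀
  have h8u : 8 * u ≤ t := by nlinarith [quadratic_le_exp_of_nonneg (by linarith : 0 ≤ u)]
  set k := ⌊t / (4 * u)⌋₊
  have hku : k * (4 * u) ≤ t := (le_div_iff₀ (by positivity)).1 (Nat.floor_le (by positivity))
  have hk8 : 8 * k ≤ t := by nlinarith [k.cast_nonneg (α := ℝ)]
  refine ⟨k, ?_, ?_, ?_⟩
  · have hlt : t / (4 * u) < k + 1 := Nat.lt_floor_add_one _
    have h1 : 1 ≤ t / (8 * u) := (le_div_iff₀ (by positivity)).2 (by linarith)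
    have h2 : t / (4 * u) = 2 * (t / (8 * u)) := by field_simp; ring
    linarith
  · calc (8 * k : ℝ) ^ k ≤ t ^ k := by gcongr
      _ = exp (k * u) := by rw [← hut, ← exp_nat_mul]
      _ ≤ exp (t / 4) := exp_le_exp.2 (by linarith)
  · linarith [add_one_le_exp (t / 2)]

lemma natCard_adj_eq_card_mul {V : Type*} [Fintype V] (G : SimpleGraph V) {d : ℕ}
    (hG : ∀ v, Nat.card {w // G.Adj v w} = d) :
    Nat.card {p : V × V // G.Adj p.1 p.2} = Fintype.card V * d := by
  rw [Nat.card_congr (Equiv.subtypeProdEquivSigmaSubtype fun v w => G.Adj v w), Nat.card_sigma]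
  simp [hG]

lemma occupancy_le_two_mul_maxLoad {n : ℕ} {G : SimpleGraph (Fin n)}
    {A : (Fin n → {p : Fin n × Fin n // G.Adj p.1 p.2}) → Fin n → Fin n}
    (hA : GreedyEdgeChoice G A) (ω : Fin n → {p : Fin n × Fin n // G.Adj p.1 p.2})
    (e : {p : Fin n × Fin n // G.Adj p.1 p.2}) :
    occupancy ω e ≤ 2 * maxLoad (A ω) := by
  have hsub : fiber ω e
      ⊆ ({b | A ω b = (e : Fin n × Fin n).1} : Finset (Fin n)) ∪
        ({b | A ω b = (e : Fin n × Fin n).2} : Finset (Fin n)) := by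
    intro b hb
    rw [mem_fiber] at hb
    simpa [hb] using (hA ω b).1
  calc occupancy ω e ≤ load (A ω) (e : Fin n × Fin n).1 + load (A ω) (e : Fin n × Fin n).2 :=
        (card_le_card hsub).trans (card_union_le _ _)
    _ ≤ maxLoad (A ω) + maxLoad (A ω) := add_le_add (le_sup (mem_univ _)) (le_sup (mem_univ _))
    _ = 2 * maxLoad (A ω) := (two_mul _).symm

open Real in
/-- On a `4`-regular graph with `n` vertices, edge-sampling greedy placement of `n`
balls yields maximum load at least `Ω(log n / log log n)` with high probability
`1 − n^{−Ω(1)}`: no power-of-two-choices improvement over single choice. -/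
theorem edge_sampling_four_regular_lower_bound :
    ∃ c > (0:ℝ), ∃ N : ℕ, ∀ n ≥ N,
      ∀ G : SimpleGraph (Fin n), (∀ v : Fin n, Nat.card {w // G.Adj v w} = 4) →
      ∀ A : (Fin n → {p : Fin n × Fin n // G.Adj p.1 p.2}) → Fin n → Fin n,
        GreedyEdgeChoice G A →
        ((Nat.card {ω : Fin n → {p : Fin n × Fin n // G.Adj p.1 p.2} //
            c * (log n / log (log n)) ≤ (maxLoad (A ω) : ℝ)} : ℝ)
          ≥ (1 - (n : ℝ) ^ (-c)) *
            (Nat.card (Fin n → {p : Fin n × Fin n // G.Adj p.1 p.2}) : ℝ)) := by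
  refine ⟨1 / 16, by norm_num, ⌈exp (exp 16)⌉₊, fun n hn G hG A hA => ?_⟩
  classical
  have hlog : exp 16 ≤ log n := by
    simpa using log_le_log (exp_pos _) (Nat.ceil_le.1 hn)
  obtain ⟨k, hk, hk8, hk2⟩ := exists_nat_ge_div_log_and_pow_le_exp hlog
  have hE : Fintype.card {p : Fin n × Fin n // G.Adj p.1 p.2} = 4 * n := by
    rw [Fintype.card_eq_nat_card, natCard_adj_eq_card_mul G hG, Fintype.card_fin, mul_comm]
  have hcount := one_sub_rpow_mul_pow_le_card_exists_occupancy_eq_of_card_eq hE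
    (by linarith [add_one_le_exp 16]) hk8 hk2
  have hsub : ({ω | ∃ e, occupancy ω e = k} : Finset (Fin n → _))
      ⊆ ({ω | 1 / 16 * (log n / log (log n)) ≤ (maxLoad (A ω) : ℝ)} : Finset _) := by
    intro ω hω
    obtain ⟨e, rfl⟩ := (mem_filter.1 hω).2
    have hload : (occupancy ω e : ℝ) ≤ 2 * maxLoad (A ω) := by
      exact_mod_cast occupancy_le_two_mul_maxLoad hA ω e
    refine mem_filter.2 ⟨mem_univ _, ?_⟩
    calc 1 / 16 * (log n / log (log n)) = log n / (8 * log (log n)) / 2 := by ring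
      _ ≤ maxLoad (A ω) := by linarith
  rw [Nat.card_eq_fintype_card, Fintype.card_subtype, Nat.card_eq_fintype_card, Fintype.card_fun,
    Fintype.card_fin, ge_iff_le]
  push_cast
  exact hcount.trans (by exact_mod_cast card_le_card hsub)
end

section
/- Suppose m = n balls are thrown into N = O(n) bins, each ball independently choosing a bin according to an arbitrary probability distribution p over the bins, and suppose each bin is labeled by an unordered pair of servers from an n-element server set, each ball being assigned to the lesser-loaded server of its bin's pair. Then the expected maximum server load is at least (1/2)·Ω(log n / log log n). -/
/-!
Every ball goes to one of the two servers of its bin, so one of the two servers of the fullest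
bin receives at least half of that bin's balls: the maximum server load is at least half the
maximum bin load, whatever the assignment rule. The expected maximum bin load is at least
`t / 3` for `t ≈ log n / (2 log log n)`, for every distribution `p` on `N = O(n)` bins. If a bin
has `n p_j > 2t`, its expected load alone exceeds `2t`. Otherwise the events "bin `j` receives
exactly `t` balls" have total probability `∑ⱼ C(n,t) p_jᵗ (1 - p_j)ⁿ⁻ᵗ ≥ 1` (by the power mean
inequality, since there are only `O(n)` bins), and any two of them are correlated at most by a
factor `2`; the second moment method then shows that one of them occurs with probability at
least `1 / 3`.
-/

open Finset Filter Real

section FiniteProbability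

variable {Ω κ : Type*} [Fintype Ω] {w : Ω → ℝ}

theorem mul_sum_filter_le_sum_mul (hw : ∀ ω, 0 ≤ w ω) {f : Ω → ℝ} (hf : ∀ ω, 0 ≤ f ω) (t : ℝ) :
    t * ∑ ω with t ≤ f ω, w ω ≤ ∑ ω, w ω * f ω := by
  rw [mul_sum]
  calc ∑ ω with t ≤ f ω, t * w ω ≤ ∑ ω with t ≤ f ω, w ω * f ω :=
        sum_le_sum fun ω hω => by
          rw [mul_comm]; exact mul_le_mul_of_nonneg_left (mem_filter.1 hω).2 (hw ω)
    _ ≤ ∑ ω, w ω * f ω :=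
        sum_le_sum_of_subset_of_nonneg (filter_subset _ _) fun ω _ _ => mul_nonneg (hw ω) (hf ω)

/-- With `X = ∑ k, 𝟙 (E k)`, this is the expectation of `2 a X - a² X² = 1 - (1 - a X)² ≤ 1`,
valid wherever `X ≠ 0`. -/
theorem two_mul_sum_sub_sq_mul_sum_le_sum_exists [Fintype κ] (hw : ∀ ω, 0 ≤ w ω)
    (E : κ → Ω → Prop) [∀ k, DecidablePred (E k)] (a : ℝ) :
    2 * a * ∑ k, ∑ ω with E k ω, w ω - a ^ 2 * ∑ k, ∑ k', ∑ ω with E k ω ∧ E k' ω, w ω ≤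
      ∑ ω with ∃ k, E k ω, w ω := by
  set X : Ω → ℝ := fun ω => ∑ k, if E k ω then 1 else 0
  have h1 : ∑ k, ∑ ω with E k ω, w ω = ∑ ω, w ω * X ω := by
    simp only [sum_filter, X, mul_sum, mul_ite, mul_one, mul_zero]
    exact sum_comm
  have hX : ∀ ω, X ω ^ 2 = ∑ k, ∑ k', if E k ω ∧ E k' ω then 1 else 0 := fun ω => by
    simp only [X, sq, sum_mul_sum, ite_zero_mul_ite_zero, mul_one]
  have h2 : ∑ k, ∑ k', ∑ ω with E k ω ∧ E k' ω, w ω = ∑ ω, w ω * X ω ^ 2 := by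
    simp only [hX, sum_filter, mul_sum, mul_ite, mul_one, mul_zero]
    exact (sum_congr rfl fun _ _ => sum_comm).trans sum_comm
  rw [h1, h2, sum_filter, mul_sum, mul_sum, ← sum_sub_distrib]
  refine sum_le_sum fun ω _ => ?_
  split_ifs with h
  · nlinarith [hw ω, mul_nonneg (hw ω) (sq_nonneg (1 - a * X ω))]
  · push Not at h
    simp [X, h]

theorem third_le_sum_exists_of_le_two_mul [Fintype κ] (hw : ∀ ω, 0 ≤ w ω)
    (E : κ → Ω → Prop) [∀ k, DecidablePred (E k)]
    (hpair : ∀ k k', k ≠ k' → ∑ ω with E k ω ∧ E k' ω, w ω ≤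
      2 * (∑ ω with E k ω, w ω) * ∑ ω with E k' ω, w ω)
    (hsum : 1 ≤ ∑ k, ∑ ω with E k ω, w ω) :
    1 / 3 ≤ ∑ ω with ∃ k, E k ω, w ω := by
  classical
  set P : κ → ℝ := fun k => ∑ ω with E k ω, w ω
  set Q := ∑ k, P k
  have hP : ∀ k, 0 ≤ P k := fun k => sum_nonneg fun ω _ => hw ω
  have hpair' : ∀ k k', ∑ ω with E k ω ∧ E k' ω, w ω ≤
      (if k = k' then P k else 0) + 2 * P k * P k' := fun k k' => by
    by_cases hkk' : k = k'
    · subst hkk'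
      simp only [and_self, if_true]
      nlinarith [hP k]
    · rw [if_neg hkk', zero_add]
      exact hpair k k' hkk'
  have hmoment : ∑ k, ∑ k', ∑ ω with E k ω ∧ E k' ω, w ω ≤ Q + 2 * Q ^ 2 := by
    calc _ ≤ ∑ k, ∑ k', ((if k = k' then P k else 0) + 2 * P k * P k') :=
          sum_le_sum fun k _ => sum_le_sum fun k' _ => hpair' k k'
      _ = _ := by
          simp only [sum_add_distrib, sum_ite_eq, mem_univ, if_true]
          rw [sq, sum_mul_sum, mul_sum]
          simp only [mul_sum, mul_assoc]
          rfl
  have hQ : 0 < Q := by linarith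
  have hsecond := two_mul_sum_sub_sq_mul_sum_le_sum_exists hw E (1 / (3 * Q))
  have hmoment' := mul_le_mul_of_nonneg_left hmoment (sq_nonneg (1 / (3 * Q)))
  have h1 : 2 * (1 / (3 * Q)) * Q = 2 / 3 := by field_simp
  have h2 : (1 / (3 * Q)) ^ 2 * (Q + 2 * Q ^ 2) = 1 / (9 * Q) + 2 / 9 := by field_simp; ring
  have h3 : 1 / (9 * Q) ≤ 1 / 9 := by gcongr; linarith
  linarith

end FiniteProbability

theorem Real.exp_neg_two_mul_le_one_sub {x : ℝ} (h0 : 0 ≤ x) (h1 : x ≤ 1 / 2) :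
    exp (-(2 * x)) ≤ 1 - x := by
  have hpos : 0 < 1 + 2 * x := by linarith
  calc exp (-(2 * x)) = (exp (2 * x))⁻¹ := exp_neg _
    _ ≤ (1 + 2 * x)⁻¹ := inv_anti₀ hpos (by linarith [add_one_le_exp (2 * x)])
    _ ≤ 1 - x := by rw [inv_le_iff_one_le_mul₀ hpos]; nlinarith

theorem Real.exp_neg_two_mul_mul_le_one_sub_pow {x : ℝ} (h0 : 0 ≤ x) (h1 : x ≤ 1 / 2) (n : ℕ) :
    exp (-(2 * n * x)) ≤ (1 - x) ^ n := by
  rw [show -(2 * n * x) = n * -(2 * x) by ring, exp_nat_mul]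
  exact pow_le_pow_left₀ (exp_nonneg _) (exp_neg_two_mul_le_one_sub h0 h1) n

theorem one_sub_add_pow_sub_two_mul_le {a b : ℝ} (ha : 0 ≤ a) (hb : 0 ≤ b) (hab : a + b ≤ 1)
    {t : ℕ} (ht : 2 * (a + b) * t ≤ 1) (n : ℕ) :
    (1 - a - b) ^ (n - 2 * t) ≤ 2 * ((1 - a) ^ (n - t) * (1 - b) ^ (n - t)) := by
  set c := (1 - a) * (1 - b)
  have hc0 : 0 ≤ c := mul_nonneg (by linarith) (by linarith)
  have hc1 : c ≤ 1 := by nlinarith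
  have hct : 1 / 2 ≤ c ^ t := by
    have h1 : 1 - t * a ≤ (1 - a) ^ t := by
      simpa [sub_eq_add_neg] using one_add_mul_le_pow (a := -a) (by linarith) t
    have h2 : 1 - t * b ≤ (1 - b) ^ t := by
      simpa [sub_eq_add_neg] using one_add_mul_le_pow (a := -b) (by linarith) t
    have hta : 0 ≤ 1 - t * a := by nlinarith [mul_nonneg hb (Nat.cast_nonneg (α := ℝ) t)]
    have htb : 0 ≤ 1 - t * b := by nlinarith [mul_nonneg ha (Nat.cast_nonneg (α := ℝ) t)]
    rw [mul_pow]
    nlinarith [mul_le_mul h1 h2 htb (hta.trans h1), mul_nonneg (mul_nonneg ha hb)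
      (sq_nonneg (t : ℝ))]
  calc (1 - a - b) ^ (n - 2 * t) ≤ c ^ (n - 2 * t) :=
        pow_le_pow_left₀ (by linarith) (by nlinarith) _
    _ ≤ 2 * c ^ (n - 2 * t + t) := by rw [pow_add]; nlinarith [pow_nonneg hc0 (n - 2 * t)]
    _ ≤ 2 * c ^ (n - t) := by gcongr 2 * ?_; exact pow_le_pow_of_le_one hc0 hc1 (by omega)
    _ = _ := by rw [mul_pow]

theorem Nat.div_two_mul_pow_le_choose {n t : ℕ} (h : 2 * t ≤ n) :
    ((n : ℝ) / (2 * t)) ^ t ≤ n.choose t := by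
  calc ((n : ℝ) / (2 * t)) ^ t = ((n : ℝ) / 2) ^ t / (t : ℝ) ^ t := by
        rw [div_mul_eq_div_div, div_pow]
    _ ≤ ((n : ℝ) / 2) ^ t / t.factorial :=
        div_le_div_of_nonneg_left (by positivity) (by positivity)
          (by exact_mod_cast Nat.factorial_le_pow t)
    _ ≤ ((n + 1 - t : ℕ) : ℝ) ^ t / t.factorial := by
        have h' : 2 * (t : ℝ) ≤ n := by exact_mod_cast h
        gcongr
        rw [Nat.cast_sub (by omega)]
        push_cast
        linarith
    _ ≤ n.choose t := Nat.pow_le_choose t n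

theorem Fintype.prod_ite_mem_eq_pow_mul_pow {β R : Type*} [Fintype β] [DecidableEq β]
    [CommMonoid R] (T : Finset β) (x y : R) :
    ∏ b, (if b ∈ T then x else y) = x ^ #T * y ^ (Fintype.card β - #T) := by
  rw [prod_ite, prod_const, prod_const, filter_mem_eq_inter, univ_inter, filter_not,
    filter_mem_eq_inter, univ_inter, card_univ_sdiff]

theorem Fintype.prod_ite_mem_ite_mem_eq {β R : Type*} [Fintype β] [DecidableEq β] [CommMonoid R]
    {T T' : Finset β} (h : Disjoint T T') (x y z : R) :
    ∏ b, (if b ∈ T then x else if b ∈ T' then y else z) =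
      x ^ #T * y ^ #T' * z ^ (Fintype.card β - #T - #T') := by
  rw [prod_ite, prod_const, filter_mem_eq_inter, univ_inter, prod_ite, prod_const, prod_const,
    filter_filter, filter_filter, mul_assoc]
  have h1 : ({b | b ∉ T ∧ b ∈ T'} : Finset β) = T' := by
    ext b; simpa using fun hb hbT => disjoint_left.1 h hbT hb
  have h2 : ({b | b ∉ T ∧ b ∉ T'} : Finset β) = univ \ (T ∪ T') := by
    ext b; simp
  rw [h1, h2, card_univ_sdiff, card_union_of_disjoint h, Nat.sub_sub]

namespace BallsIntoBins

def binomialProb (n t : ℕ) (x : ℝ) : ℝ := n.choose t * (x ^ t * (1 - x) ^ (n - t))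

/-- `hN` is exactly what makes `C(n,t) e^{-4t} N^{1-t} ≥ 1`, by `C(n,t) ≥ (n / 2t)ᵗ`; the factors
come from `(1 - pᵢ)ⁿ⁻ᵗ ≥ e^{-4t}` and the power mean bound `∑ pᵢᵗ ≥ N^{1-t}`. -/
theorem one_le_sum_binomialProb {ι : Type*} [Fintype ι] {p : ι → ℝ}
    (hp : ∀ i, 0 ≤ p i) (hp1 : ∑ i, p i = 1) {n t : ℕ} (ht : 1 ≤ t) (h4t : 4 * t ≤ n)
    (hlight : ∀ i, n * p i ≤ 2 * t)
    (hN : (2 * exp 4 * t) ^ t * Fintype.card ι ^ (t - 1) ≤ (n : ℝ) ^ t) :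
    1 ≤ ∑ i, binomialProb n t (p i) := by
  have htpos : (0 : ℝ) < t := by exact_mod_cast ht
  have hfar : ∀ i, exp (-(4 * t)) ≤ (1 - p i) ^ (n - t) := fun i => by
    have hpi : p i ≤ 1 / 2 := by
      have : (4 * t : ℝ) ≤ n := by exact_mod_cast h4t
      nlinarith [hlight i]
    calc exp (-(4 * t)) ≤ exp (-(2 * n * p i)) := exp_le_exp.2 (by linarith [hlight i])
      _ ≤ (1 - p i) ^ n := exp_neg_two_mul_mul_le_one_sub_pow (hp i) hpi n
      _ ≤ (1 - p i) ^ (n - t) :=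
          pow_le_pow_of_le_one (by linarith) (by linarith [hp i]) (Nat.sub_le n t)
  have hcard : (0 : ℝ) < Fintype.card ι ^ (t - 1) := by
    have : (univ : Finset ι).Nonempty := nonempty_of_sum_ne_zero (by rw [hp1]; exact one_ne_zero)
    exact pow_pos (by exact_mod_cast card_pos.2 this) _
  have hmean : 1 / Fintype.card ι ^ (t - 1) ≤ ∑ i, p i ^ t := by
    simpa [Nat.sub_add_cancel ht, hp1] using
      pow_sum_div_card_le_sum_pow (s := univ) (fun i _ => hp i) (t - 1)
  calc 1 ≤ (n : ℝ) ^ t / ((2 * exp 4 * t) ^ t * Fintype.card ι ^ (t - 1)) :=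
        (one_le_div (by positivity)).2 hN
    _ = ((n : ℝ) / (2 * t)) ^ t * exp (-(4 * t)) * (1 / Fintype.card ι ^ (t - 1)) := by
        rw [show -(4 * (t : ℝ)) = t * -4 by ring, exp_nat_mul, exp_neg, div_pow, mul_pow (2 : ℝ),
          mul_pow, mul_pow, inv_pow]
        field_simp
    _ ≤ n.choose t * exp (-(4 * t)) * ∑ i, p i ^ t := by
        gcongr
        exact Nat.div_two_mul_pow_le_choose (by omega)
    _ = ∑ i, n.choose t * (p i ^ t * exp (-(4 * t))) := by
        rw [mul_sum]; exact sum_congr rfl fun i _ => by ring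
    _ ≤ _ := by unfold binomialProb; gcongr with i; exacts [pow_nonneg (hp i) t, hfar i]

variable {β ι : Type*} [Fintype β] {p : ι → ℝ}

def weight (p : ι → ℝ) (ω : β → ι) : ℝ := ∏ b, p (ω b)

def fiber [DecidableEq ι] (ω : β → ι) (j : ι) : Finset β := {b | ω b = j}

def maxBinLoad [Fintype ι] [DecidableEq ι] (ω : β → ι) : ℕ := univ.sup fun j => #(fiber ω j)

theorem card_fiber_le_maxBinLoad [Fintype ι] [DecidableEq ι] (ω : β → ι) (j : ι) :
    #(fiber ω j) ≤ maxBinLoad ω :=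
  le_sup (f := fun j => #(fiber ω j)) (mem_univ j)

theorem weight_nonneg (hp : ∀ i, 0 ≤ p i) (ω : β → ι) : 0 ≤ weight p ω :=
  prod_nonneg fun _ _ => hp _

theorem sum_weight_piFinset [DecidableEq β] (S : β → Finset ι) :
    ∑ ω ∈ Fintype.piFinset S, weight p ω = ∏ b, ∑ i ∈ S b, p i :=
  (prod_univ_sum S fun _ => p).symm

theorem sum_erase_eq_one_sub [Fintype ι] [DecidableEq ι] (hp1 : ∑ i, p i = 1) (j : ι) :
    ∑ i ∈ univ.erase j, p i = 1 - p j := by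
  rw [sum_erase_eq_sub (mem_univ j), hp1]

theorem add_le_one_of_ne [Fintype ι] [DecidableEq ι] (hp : ∀ i, 0 ≤ p i) (hp1 : ∑ i, p i = 1)
    {j j' : ι} (hjj' : j ≠ j') : p j + p j' ≤ 1 := by
  simpa [sum_pair hjj', hp1] using
    sum_le_sum_of_subset_of_nonneg (subset_univ {j, j'}) fun i _ _ => hp i

variable [DecidableEq β] [Fintype ι] [DecidableEq ι]

theorem filter_fiber_eq_piFinset (j : ι) (T : Finset β) :
    ({ω | fiber ω j = T} : Finset (β → ι)) =
      Fintype.piFinset fun b => if b ∈ T then {j} else univ.erase j := by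
  ext ω
  simp only [mem_filter, mem_univ, true_and, Fintype.mem_piFinset, fiber, Finset.ext_iff]
  refine forall_congr' fun b => ?_
  split_ifs with hb <;> simp [hb]

theorem sum_weight_card_fiber_eq (hp1 : ∑ i, p i = 1) (j : ι) (t : ℕ) :
    ∑ ω : β → ι with #(fiber ω j) = t, weight p ω = binomialProb (Fintype.card β) t (p j) := by
  rw [← sum_fiberwise_of_maps_to (t := powersetCard t univ) (g := (fiber · j))
    fun ω hω => mem_powersetCard.2 ⟨subset_univ _, (mem_filter.1 hω).2⟩]
  have hT : ∀ T ∈ powersetCard t (univ : Finset β),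
      ∑ ω ∈ {ω | #(fiber ω j) = t} with fiber ω j = T, weight p ω =
        p j ^ t * (1 - p j) ^ (Fintype.card β - t) := by
    intro T hT
    obtain ⟨-, rfl⟩ := mem_powersetCard.1 hT
    rw [filter_filter, filter_congr fun ω _ => and_iff_right_of_imp fun h => h ▸ rfl,
      filter_fiber_eq_piFinset, sum_weight_piFinset]
    simp only [apply_ite (fun S => ∑ i ∈ S, p i), sum_singleton, sum_erase_eq_one_sub hp1]
    exact Fintype.prod_ite_mem_eq_pow_mul_pow T _ _
  rw [sum_congr rfl hT, sum_const, card_powersetCard, card_univ, nsmul_eq_mul, binomialProb]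

theorem sum_weight_mul_card_fiber (hp1 : ∑ i, p i = 1) (j : ι) :
    ∑ ω : β → ι, weight p ω * #(fiber ω j) = Fintype.card β * p j := by
  have hball : ∀ b : β, ∑ ω : β → ι with ω b = j, weight p ω = p j := fun b => by
    have : ({ω | ω b = j} : Finset (β → ι)) =
        Fintype.piFinset fun b' => if b' = b then {j} else univ := by
      ext ω
      simp only [mem_filter, mem_univ, true_and, Fintype.mem_piFinset]
      exact ⟨fun h b' => by split_ifs with hb <;> simp [hb, h], fun h => by simpa using h b⟩
    rw [this, sum_weight_piFinset]
    simp [apply_ite (fun S => ∑ i ∈ S, p i), hp1]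
  simp only [fiber, card_filter, Nat.cast_sum, Nat.cast_ite, Nat.cast_one, Nat.cast_zero,
    mul_sum, mul_ite, mul_one, mul_zero]
  rw [sum_comm]
  simp only [← sum_filter, hball, sum_const, card_univ, nsmul_eq_mul]

theorem sum_weight_fiber_eq_and_fiber_eq_le (hp : ∀ i, 0 ≤ p i) (hp1 : ∑ i, p i = 1)
    {j j' : ι} (hjj' : j ≠ j') {T T' : Finset β} (hdisj : Disjoint T T') :
    ∑ ω : β → ι with fiber ω j = T ∧ fiber ω j' = T', weight p ω ≤
      p j ^ #T * p j' ^ #T' * (1 - p j - p j') ^ (Fintype.card β - #T - #T') := by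
  let S : β → Finset ι := fun b =>
    if b ∈ T then {j} else if b ∈ T' then {j'} else (univ.erase j).erase j'
  have hsum : ∀ b, ∑ i ∈ S b, p i =
      if b ∈ T then p j else if b ∈ T' then p j' else 1 - p j - p j' := fun b => by
    simp only [S]
    split_ifs
    · exact sum_singleton _ _
    · exact sum_singleton _ _
    · rw [sum_erase_eq_sub (mem_erase.2 ⟨hjj'.symm, mem_univ _⟩), sum_erase_eq_one_sub hp1]
  have hsub : ({ω | fiber ω j = T ∧ fiber ω j' = T'} : Finset (β → ι)) ⊆
      Fintype.piFinset S := fun ω hω => by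
    obtain ⟨rfl, rfl⟩ := (mem_filter.1 hω).2
    refine Fintype.mem_piFinset.2 fun b => ?_
    by_cases hb : ω b = j
    · simp [S, fiber, hb]
    · by_cases hb' : ω b = j' <;> simp [S, fiber, hb, hb', hjj'.symm]
  calc _ ≤ ∑ ω ∈ Fintype.piFinset S, weight p ω :=
        sum_le_sum_of_subset_of_nonneg hsub fun ω _ _ => weight_nonneg hp ω
    _ = _ := by
        rw [sum_weight_piFinset, prod_congr rfl fun b _ => hsum b,
          Fintype.prod_ite_mem_ite_mem_eq hdisj]

theorem sum_weight_card_fiber_eq_and_le (hp : ∀ i, 0 ≤ p i) (hp1 : ∑ i, p i = 1) {j j' : ι}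
    (hjj' : j ≠ j') (t : ℕ) :
    ∑ ω : β → ι with #(fiber ω j) = t ∧ #(fiber ω j') = t, weight p ω ≤
      (Fintype.card β).choose t ^ 2 *
        (p j ^ t * p j' ^ t * (1 - p j - p j') ^ (Fintype.card β - 2 * t)) := by
  set D := (powersetCard t univ ×ˢ powersetCard t univ).filter
    fun TT : Finset β × Finset β => Disjoint TT.1 TT.2
  have hmaps : ∀ ω ∈ ({ω | #(fiber ω j) = t ∧ #(fiber ω j') = t} : Finset (β → ι)),
      (fiber ω j, fiber ω j') ∈ D := fun ω hω => by
    obtain ⟨hj, hj'⟩ := (mem_filter.1 hω).2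
    simp only [D, mem_filter, mem_product, mem_powersetCard, subset_univ, true_and, hj, hj']
    exact disjoint_filter.2 fun b _ h h' => hjj' (h ▸ h')
  have hT : ∀ TT ∈ D,
      ∑ ω ∈ {ω | #(fiber ω j) = t ∧ #(fiber ω j') = t} with (fiber ω j, fiber ω j') = TT,
        weight p ω ≤ p j ^ t * p j' ^ t * (1 - p j - p j') ^ (Fintype.card β - 2 * t) := by
    rintro ⟨T, T'⟩ hTT
    simp only [D, mem_filter, mem_product, mem_powersetCard] at hTT
    obtain ⟨⟨⟨-, rfl⟩, -, hT'⟩, hdisj⟩ := hTT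
    rw [filter_filter]
    refine le_of_eq_of_le (sum_congr (filter_congr fun ω _ => ?_) fun _ _ => rfl)
      ((sum_weight_fiber_eq_and_fiber_eq_le hp hp1 hjj' hdisj).trans_eq ?_)
    · rw [Prod.mk.injEq]
      exact ⟨fun h => h.2, fun h => ⟨⟨h.1 ▸ rfl, h.2 ▸ hT'⟩, h⟩⟩
    · rw [hT', Nat.sub_sub, two_mul]
  have hD : (#D : ℝ) ≤ (Fintype.card β).choose t ^ 2 := by
    have : #D ≤ (Fintype.card β).choose t ^ 2 := by
      refine (card_filter_le _ _).trans_eq ?_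
      rw [card_product, card_powersetCard, card_univ, sq]
    exact_mod_cast this
  have hpair : 0 ≤ 1 - p j - p j' := by linarith [add_le_one_of_ne hp hp1 hjj']
  rw [← sum_fiberwise_of_maps_to hmaps]
  calc _ ≤ ∑ _ ∈ D, p j ^ t * p j' ^ t * (1 - p j - p j') ^ (Fintype.card β - 2 * t) :=
        sum_le_sum hT
    _ ≤ _ := by
        rw [sum_const, nsmul_eq_mul]
        exact mul_le_mul_of_nonneg_right hD (by have := hp j; have := hp j'; positivity)

theorem sum_weight_card_fiber_eq_and_le_two_mul (hp : ∀ i, 0 ≤ p i) (hp1 : ∑ i, p i = 1)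
    {j j' : ι} (hjj' : j ≠ j') {t : ℕ} (ht : 2 * (p j + p j') * t ≤ 1) :
    ∑ ω : β → ι with #(fiber ω j) = t ∧ #(fiber ω j') = t, weight p ω ≤
      2 * (∑ ω : β → ι with #(fiber ω j) = t, weight p ω) *
        ∑ ω : β → ι with #(fiber ω j') = t, weight p ω := by
  rw [sum_weight_card_fiber_eq hp1, sum_weight_card_fiber_eq hp1]
  calc _ ≤ _ := sum_weight_card_fiber_eq_and_le hp hp1 hjj' t
    _ ≤ (Fintype.card β).choose t ^ 2 * (p j ^ t * p j' ^ t *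
          (2 * ((1 - p j) ^ (Fintype.card β - t) * (1 - p j') ^ (Fintype.card β - t)))) := by
        gcongr
        · have := hp j; have := hp j'; positivity
        · exact one_sub_add_pow_sub_two_mul_le (hp j) (hp j') (add_le_one_of_ne hp hp1 hjj') ht _
    _ = _ := by rw [binomialProb, binomialProb]; ring

theorem third_le_sum_weight_exists_card_fiber_eq (hp : ∀ i, 0 ≤ p i) (hp1 : ∑ i, p i = 1)
    {t : ℕ} (ht : 1 ≤ t) (h8t : 8 * t ^ 2 ≤ Fintype.card β)
    (hlight : ∀ i, Fintype.card β * p i ≤ 2 * t)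
    (hN : (2 * exp 4 * t) ^ t * Fintype.card ι ^ (t - 1) ≤ (Fintype.card β : ℝ) ^ t) :
    1 / 3 ≤ ∑ ω : β → ι with ∃ j, #(fiber ω j) = t, weight p ω := by
  have hn8 : (8 * t ^ 2 : ℝ) ≤ Fintype.card β := by exact_mod_cast h8t
  have hn : (0 : ℝ) < Fintype.card β := by
    have : (1 : ℝ) ≤ t := by exact_mod_cast ht
    nlinarith
  refine third_le_sum_exists_of_le_two_mul (weight_nonneg hp)
    (fun j (ω : β → ι) => #(fiber ω j) = t)
    (fun j j' hjj' => sum_weight_card_fiber_eq_and_le_two_mul hp hp1 hjj' ?_) ?_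
  · refine le_of_mul_le_mul_right (a := (Fintype.card β : ℝ)) ?_ hn
    nlinarith [mul_le_mul_of_nonneg_right (add_le_add (hlight j) (hlight j'))
      (Nat.cast_nonneg (α := ℝ) t)]
  · simp only [sum_weight_card_fiber_eq hp1]
    exact one_le_sum_binomialProb hp hp1 ht (by nlinarith) hlight hN

theorem div_three_le_sum_weight_mul_maxBinLoad (hp : ∀ i, 0 ≤ p i) (hp1 : ∑ i, p i = 1)
    {t : ℕ} (ht : 1 ≤ t) (h8t : 8 * t ^ 2 ≤ Fintype.card β)
    (hN : (2 * exp 4 * t) ^ t * Fintype.card ι ^ (t - 1) ≤ (Fintype.card β : ℝ) ^ t) :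
    (t : ℝ) / 3 ≤ ∑ ω : β → ι, weight p ω * maxBinLoad ω := by
  have hw := weight_nonneg (β := β) hp
  by_cases hheavy : ∃ j, 2 * t < Fintype.card β * p j
  · obtain ⟨j, hj⟩ := hheavy
    calc (t : ℝ) / 3 ≤ Fintype.card β * p j := by linarith [(Nat.cast_nonneg t : (0 : ℝ) ≤ t)]
      _ = ∑ ω : β → ι, weight p ω * #(fiber ω j) := (sum_weight_mul_card_fiber hp1 j).symm
      _ ≤ _ := sum_le_sum fun ω _ =>
          mul_le_mul_of_nonneg_left (by exact_mod_cast card_fiber_le_maxBinLoad ω j) (hw ω)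
  · push Not at hheavy
    calc (t : ℝ) / 3 ≤ t * ∑ ω : β → ι with ∃ j, #(fiber ω j) = t, weight p ω := by
          have := third_le_sum_weight_exists_card_fiber_eq hp hp1 ht h8t hheavy hN
          nlinarith [(Nat.cast_nonneg t : (0 : ℝ) ≤ t)]
      _ ≤ t * ∑ ω : β → ι with (t : ℝ) ≤ maxBinLoad ω, weight p ω := by
          refine mul_le_mul_of_nonneg_left (sum_le_sum_of_subset_of_nonneg (fun ω hω => ?_)
            fun ω _ _ => hw ω) (Nat.cast_nonneg t)
          obtain ⟨j, hj⟩ := (mem_filter.1 hω).2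
          exact mem_filter.2 ⟨mem_univ ω, by exact_mod_cast hj ▸ card_fiber_le_maxBinLoad ω j⟩
      _ ≤ _ := mul_sum_filter_le_sum_mul hw (fun ω => Nat.cast_nonneg _) t

theorem maxBinLoad_le_two_mul_maxLoad {n : ℕ} (label : ι → Fin n × Fin n) (alloc : Fin n → Fin n)
    (ω : Fin n → ι) (halloc : ∀ b, alloc b = (label (ω b)).1 ∨ alloc b = (label (ω b)).2) :
    maxBinLoad ω ≤ 2 * maxLoad alloc := by
  refine Finset.sup_le fun j _ => ?_
  have hload : ∀ v, #({b ∈ fiber ω j | alloc b = v}) ≤ maxLoad alloc := fun v =>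
    (card_le_card (filter_subset_filter _ (subset_univ _))).trans
      (le_sup (f := load alloc) (mem_univ v))
  calc #(fiber ω j)
      ≤ #({b ∈ fiber ω j | alloc b = (label j).1} ∪ {b ∈ fiber ω j | alloc b = (label j).2}) := by
        refine card_le_card fun b hb => ?_
        have hbj : ω b = j := (mem_filter.1 hb).2
        rcases halloc b with h | h <;> simp [hb, h, hbj]
    _ ≤ maxLoad alloc + maxLoad alloc := (card_union_le _ _).trans (add_le_add (hload _) (hload _))
    _ = 2 * maxLoad alloc := (two_mul _).symm

end BallsIntoBins

theorem eventually_log_bounds (K : ℝ) :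
    ∀ᶠ n : ℕ in atTop, 4 * log (log n) ≤ log n ∧ 8 * log n ^ 2 ≤ n ∧
      2 * log K ≤ log (log n) ∧ 1 ≤ log (log n) := by
  have hlog : Tendsto (fun n : ℕ => log n) atTop atTop :=
    tendsto_log_atTop.comp tendsto_natCast_atTop_atTop
  have hloglog : Tendsto (fun n : ℕ => log (log n)) atTop atTop := tendsto_log_atTop.comp hlog
  have hsmall : ∀ {f : ℝ → ℝ}, f =o[atTop] id → ∀ c : ℝ, 0 < c →
      ∀ᶠ y : ℝ in atTop, c * f y ≤ y := fun {f} hf c hc => by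
    filter_upwards [hf.bound (inv_pos.2 hc), eventually_ge_atTop 0] with y hy hy0
    rw [Real.norm_eq_abs, Real.norm_eq_abs, id, abs_of_nonneg hy0] at hy
    have := le_abs_self (f y)
    rw [← le_div_iff₀' hc, div_eq_inv_mul]
    linarith
  exact (hlog.eventually (hsmall isLittleO_log_id_atTop 4 (by norm_num))).and
    ((tendsto_natCast_atTop_atTop.eventually
      (hsmall (isLittleO_pow_log_id_atTop (n := 2)) 8 (by norm_num))).and
    ((hloglog.eventually_ge_atTop _).and (hloglog.eventually_ge_atTop 1)))

theorem exists_threshold_of_log_bounds {n : ℕ} {K : ℝ} (hK : 0 < K)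
    (h4 : 4 * log (log n) ≤ log n) (h8 : 8 * log n ^ 2 ≤ n) (hKlog : 2 * log K ≤ log (log n))
    (h1 : 1 ≤ log (log n)) :
    ∃ t : ℕ, 1 ≤ t ∧ 8 * t ^ 2 ≤ n ∧ (K * t) ^ t ≤ (n : ℝ) ∧ log n / log (log n) ≤ 4 * t := by
  set x := log n
  set lam := log x
  have hx : 0 < x := by linarith
  have hn : (0 : ℝ) < n := by nlinarith
  set y := x / (2 * lam)
  have hy2 : 2 ≤ y := by rw [le_div_iff₀ (by positivity)]; linarith
  have hyx : y ≤ x := div_le_self hx.le (by linarith)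
  set t := ⌊y⌋₊
  have ht2 : 2 ≤ t := Nat.le_floor (by exact_mod_cast hy2)
  have htpos : (0 : ℝ) < t := by exact_mod_cast (by omega : 0 < t)
  have hty : (t : ℝ) ≤ y := Nat.floor_le (by linarith)
  have hlogt : log (K * t) ≤ 3 / 2 * lam := by
    rw [log_mul hK.ne' htpos.ne']
    linarith [log_le_log htpos (hty.trans hyx)]
  refine ⟨t, by omega, by exact_mod_cast (show (8 * t ^ 2 : ℝ) ≤ n by nlinarith), ?_, ?_⟩
  · rw [← log_le_log_iff (by positivity) hn, log_pow]
    calc (t : ℝ) * log (K * t) ≤ y * (3 / 2 * lam) := by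
          nlinarith [mul_le_mul_of_nonneg_left hlogt htpos.le]
      _ ≤ x := by rw [div_mul_eq_mul_div, div_le_iff₀ (by positivity)]; nlinarith
  · have := Nat.lt_floor_add_one y
    rw [div_le_iff₀ (by positivity)]
    rw [div_lt_iff₀ (by positivity)] at this
    nlinarith

theorem eventually_exists_threshold (C : ℝ) :
    ∀ᶠ n : ℕ in atTop, ∃ t : ℕ, 1 ≤ t ∧ 8 * t ^ 2 ≤ n ∧
      (∀ N : ℕ, (N : ℝ) ≤ C * n → (2 * exp 4 * t) ^ t * N ^ (t - 1) ≤ (n : ℝ) ^ t) ∧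
      log n / log (log n) ≤ 4 * t := by
  set D := max C 1
  have hD : 1 ≤ D := le_max_right C 1
  filter_upwards [eventually_log_bounds (2 * exp 4 * D)] with n ⟨h4, h8, hK, h1⟩
  obtain ⟨t, ht, h8t, hKt, hlog⟩ :=
    exists_threshold_of_log_bounds (by positivity) h4 h8 hK h1
  refine ⟨t, ht, h8t, fun N hN => ?_, hlog⟩
  calc (2 * exp 4 * t) ^ t * N ^ (t - 1) ≤ (2 * exp 4 * t) ^ t * (D * n) ^ (t - 1) := by
        gcongr
        exact hN.trans (by gcongr; exact le_max_left C 1)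
    _ ≤ (2 * exp 4 * t) ^ t * D ^ t * n ^ (t - 1) := by
        rw [mul_pow D, ← mul_assoc]
        gcongr
        exact Nat.sub_le t 1
    _ = (2 * exp 4 * D * t) ^ t * n ^ (t - 1) := by ring
    _ ≤ n * n ^ (t - 1) := by gcongr
    _ = (n : ℝ) ^ t := by rw [← pow_succ', Nat.sub_add_cancel ht]

open BallsIntoBins

open Real in
/-- `m = n` balls are thrown into `N = O(n)` bins, each ball independently choosing
a bin according to an arbitrary distribution `p`; each bin is labeled by an
unordered pair of distinct servers from an `n`-element server set, and each ball is
sequentially assigned to the lesser-loaded server of its bin's pair.  Then the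
expected maximum server load is at least `(1/2)·Ω(log n / log log n)`. -/
theorem pair_labeled_bins_expected_max_load :
    ∀ C > (0:ℝ), ∃ k₀ > (0:ℝ), ∃ N₀ : ℕ, ∀ n ≥ N₀, ∀ N : ℕ, 0 < N →
      (N : ℝ) ≤ C * n →
      ∀ label : Fin N → Fin n × Fin n, (∀ j, (label j).1 ≠ (label j).2) →
      ∀ p : Fin N → ℝ, (∀ j, 0 ≤ p j) → ∑ j, p j = 1 →
      ∀ A : (Fin n → Fin N) → Fin n → Fin n,
        (∀ ω b, (A ω b = (label (ω b)).1 ∨ A ω b = (label (ω b)).2) ∧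
          ∀ v, (v = (label (ω b)).1 ∨ v = (label (ω b)).2) →
            loadBefore (A ω) b (A ω b) ≤ loadBefore (A ω) b v) →
        (∑ ω : Fin n → Fin N, (∏ b, p (ω b)) * (maxLoad (A ω) : ℝ)) ≥
          (1 / 2) * (k₀ * (log n / log (log n))) := by
  intro C _
  obtain ⟨N₀, hN₀⟩ := eventually_atTop.1 (eventually_exists_threshold C)
  refine ⟨1 / 12, by norm_num, N₀, fun n hn N _ hNC label _ p hp hp1 A hA => ?_⟩
  obtain ⟨t, ht, h8t, hN, hlog⟩ := hN₀ n hn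
  have hbins := div_three_le_sum_weight_mul_maxBinLoad (β := Fin n) hp hp1 ht
    (by simpa using h8t) (by simpa using hN N hNC)
  have hservers : ∀ ω, (maxBinLoad ω : ℝ) ≤ 2 * maxLoad (A ω) := fun ω => by
    exact_mod_cast maxBinLoad_le_two_mul_maxLoad label (A ω) ω fun b => (hA ω b).1
  calc (1 / 2) * (1 / 12 * (log n / log (log n))) ≤ (1 / 2) * ((t : ℝ) / 3) := by linarith
    _ ≤ (1 / 2) * ∑ ω, weight p ω * maxBinLoad ω := by gcongr
    _ ≤ ∑ ω : Fin n → Fin N, (∏ b, p (ω b)) * (maxLoad (A ω) : ℝ) := by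
        rw [mul_sum]
        refine sum_le_sum fun ω _ => ?_
        change 1 / 2 * (weight p ω * _) ≤ weight p ω * _
        nlinarith [mul_le_mul_of_nonneg_left (hservers ω) (weight_nonneg hp ω)]
end
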